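/- Let X be a complex Banach space, A a bounded linear operator on X, and M a closed subspace of X invariant under A. If U is the unbounded connected component of the resolvent set ρ(A), then σ(A|_M) ∩ U = ∅. -/

import Mathlib

/-!
The set of `z ∈ ρ(A)` at which the resolvent `(z - A)⁻¹` maps `M` into itself is exactly
`ρ(A) ∩ ρ(A|_M)`. It is open, and it is closed in `ρ(A)` because `M` is closed and the
resolvent is continuous. It contains every `z` with `|z|` large, so by connectedness it
contains the unbounded component `U` of `ρ(A)`.
-/

/-- The restriction of a bounded linear operator `A` to a closed invariant
subspace `M`, as a bounded linear operator on `M`. -/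
noncomputable def restrictToInvariant {X : Type*} [NormedAddCommGroup X] [NormedSpace ℂ X]
    (A : X →L[ℂ] X) (M : Submodule ℂ X) (hinv : ∀ x ∈ M, A x ∈ M) :
    M →L[ℂ] M :=
  (A.comp M.subtypeL).codRestrict M (fun x => hinv x.1 x.2)

namespace restrictToInvariant

variable {X : Type*} [NormedAddCommGroup X] [NormedSpace ℂ X] {M : Submodule ℂ X}

@[simp]
lemma coe_apply {A : X →L[ℂ] X} (hinv : ∀ x ∈ M, A x ∈ M) (m : M) :
    (restrictToInvariant A M hinv m : X) = A m := rfl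

lemma isUnit_iff {T : X →L[ℂ] X} (hT : IsUnit T) (hinv : ∀ x ∈ M, T x ∈ M) :
    IsUnit (restrictToInvariant T M hinv) ↔ ∀ x ∈ M, Ring.inverse T x ∈ M := by
  obtain ⟨T, rfl⟩ := hT
  simp only [Ring.inverse_unit]
  have hinv_apply (x : X) : (↑T⁻¹ : X →L[ℂ] X) ((T : X →L[ℂ] X) x) = x :=
    congrArg (fun R : X →L[ℂ] X => R x) T.inv_mul
  have happly_inv (x : X) : (T : X →L[ℂ] X) ((↑T⁻¹ : X →L[ℂ] X) x) = x :=
    congrArg (fun R : X →L[ℂ] X => R x) T.mul_inv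
  constructor
  · rintro ⟨S, hS⟩ x hx
    have hTS : (T : X →L[ℂ] X) ((↑S⁻¹ : M →L[ℂ] M) ⟨x, hx⟩ : M) = x := by
      have := congrArg (fun R : M →L[ℂ] M => (R ⟨x, hx⟩ : X)) S.mul_inv
      rw [hS] at this
      exact this
    rw [← hTS, hinv_apply]
    exact ((↑S⁻¹ : M →L[ℂ] M) ⟨x, hx⟩).2
  · intro hinvM
    refine ⟨⟨_, restrictToInvariant (↑T⁻¹ : X →L[ℂ] X) M hinvM, ?_, ?_⟩, rfl⟩ <;>
      ext m <;> simp [hinv_apply, happly_inv]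

lemma algebraMap_sub (A : X →L[ℂ] X) (hinv : ∀ x ∈ M, A x ∈ M) (z : ℂ) :
    algebraMap ℂ (M →L[ℂ] M) z - restrictToInvariant A M hinv =
      restrictToInvariant (algebraMap ℂ (X →L[ℂ] X) z - A) M
        (fun x hx => M.sub_mem (M.smul_mem z hx) (hinv x hx)) := by
  ext m
  simp [Algebra.algebraMap_eq_smul_one]

end restrictToInvariant

section Resolvent

variable {X : Type*} [NormedAddCommGroup X] [NormedSpace ℂ X] {A : X →L[ℂ] X}
  {M : Submodule ℂ X}

lemma mem_resolventSet_restrictToInvariant_iff (hinv : ∀ x ∈ M, A x ∈ M) {z : ℂ}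
    (hz : z ∈ resolventSet ℂ A) :
    z ∈ resolventSet ℂ (restrictToInvariant A M hinv) ↔ ∀ x ∈ M, resolvent A z x ∈ M := by
  rw [spectrum.mem_resolventSet_iff, restrictToInvariant.algebraMap_sub]
  exact restrictToInvariant.isUnit_iff hz _

lemma closure_resolventSet_restrictToInvariant_inter_subset [CompleteSpace X]
    (hM : IsClosed (M : Set X)) (hinv : ∀ x ∈ M, A x ∈ M) :
    closure (resolventSet ℂ (restrictToInvariant A M hinv)) ∩ resolventSet ℂ A ⊆
      resolventSet ℂ (restrictToInvariant A M hinv) := by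
  rintro w ⟨hwB, hwA⟩
  rw [mem_resolventSet_restrictToInvariant_iff hinv hwA]
  intro x hx
  have hw : w ∈ closure (resolventSet ℂ A ∩ resolventSet ℂ (restrictToInvariant A M hinv)) :=
    (spectrum.isOpen_resolventSet A).inter_closure ⟨hwA, hwB⟩
  have hcont : ContinuousAt (fun z => resolvent A z x) w :=
    (spectrum.hasDerivAt_resolvent_const_left hwA).continuousAt.clm_apply continuousAt_const
  have hmaps : Set.MapsTo (fun z => resolvent A z x)
      (resolventSet ℂ A ∩ resolventSet ℂ (restrictToInvariant A M hinv)) M :=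
    fun z ⟨hzA, hzB⟩ => (mem_resolventSet_restrictToInvariant_iff hinv hzA).1 hzB x hx
  simpa only [hM.closure_eq, SetLike.mem_coe] using hcont.continuousWithinAt.mem_closure hw hmaps

end Resolvent

lemma inter_resolventSet_nonempty_of_not_isBounded {𝕜 B : Type*} [NontriviallyNormedField 𝕜]
    [NormedRing B] [NormedAlgebra 𝕜 B] [CompleteSpace B] {U : Set 𝕜}
    (hU : ¬ Bornology.IsBounded U) (b : B) : (U ∩ resolventSet 𝕜 b).Nonempty := by
  obtain ⟨z, hzU, hzσ⟩ := Set.not_subset.mp fun h => hU ((spectrum.isBounded b).subset h)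
  exact ⟨z, hzU, spectrum.notMem_iff.mp hzσ⟩

/-- If `U` is the unbounded connected component of the resolvent set of `A`, then the
spectrum of the restriction `A|_M` does not meet `U`. -/
theorem spectrum_restrict_unbounded_component {X : Type*} [NormedAddCommGroup X]
    [NormedSpace ℂ X] [CompleteSpace X] (A : X →L[ℂ] X) (M : Submodule ℂ X)
    (hM : IsClosed (M : Set X)) (hinv : ∀ x ∈ M, A x ∈ M) (U : Set ℂ)
    (hU : ∃ z ∈ resolventSet ℂ A, U = connectedComponentIn (resolventSet ℂ A) z)
    (hUnb : ¬ Bornology.IsBounded U) :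
    spectrum ℂ (restrictToInvariant A M hinv) ∩ U = ∅ := by
  have : CompleteSpace M := hM.completeSpace_coe
  obtain ⟨z₀, -, rfl⟩ := hU
  have hUA : connectedComponentIn (resolventSet ℂ A) z₀ ⊆ resolventSet ℂ A :=
    connectedComponentIn_subset _ _
  have hUB : connectedComponentIn (resolventSet ℂ A) z₀ ⊆
      resolventSet ℂ (restrictToInvariant A M hinv) :=
    isPreconnected_connectedComponentIn.subset_of_closure_inter_subset
      (spectrum.isOpen_resolventSet (𝕜 := ℂ) (restrictToInvariant A M hinv))
      (inter_resolventSet_nonempty_of_not_isBounded hUnb (restrictToInvariant A M hinv))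
      fun w ⟨hwB, hwU⟩ => closure_resolventSet_restrictToInvariant_inter_subset hM hinv
        ⟨hwB, hUA hwU⟩
  exact Set.disjoint_iff_inter_eq_empty.mp <| Set.disjoint_left.mpr fun _ hzσ hzU =>
    spectrum.notMem_iff.mpr (hUB hzU) hzσ
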